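/- arXiv:2002.03989 — 4 statements merged into one kernel-verified Lean document; each statement's English description precedes it below -/
import Mathlib

section
/- Let I ≥ 1, let ε > 0, and let u ∈ ℝ^I belong to the probability simplex U. Then the supremum over all o ∈ ℝ^I of ⟨o, u⟩ − M_ε(o) equals ε · ∑_{i=1}^I u_i · log(u_i). (Fenchel–Legendre conjugate of the log-sum-exp function, on-simplex case of Proposition 1.) -/
/-!
Young's inequality `y s ≤ y log y - y + exp s` for the conjugate pair `exp`, `y ↦ y log y - y`,
applied at `sᵢ = tᵢ - log ∑ⱼ exp tⱼ` and summed against `u`, gives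
`⟨t, u⟩ - log ∑ exp tᵢ ≤ ∑ uᵢ log uᵢ` for every `t`. The bound is approached by putting
`tᵢ = log uᵢ` on the support of `u` and letting `tᵢ → -∞` off it. The case of general `ε` is the
rescaling `o = ε t`.
-/

open Finset Real Filter Set Topology

theorem mul_le_mul_log_sub_add_exp {y : ℝ} (hy : 0 ≤ y) (s : ℝ) :
    y * s ≤ y * log y - y + exp s := by
  rcases hy.eq_or_lt with rfl | hy
  · simpa using (exp_pos s).le
  · have h := add_one_le_exp (s - log y)
    rw [exp_sub, exp_log hy, le_div_iff₀ hy] at h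
    linarith

section Simplex

variable {ι : Type*} [Fintype ι] {u : ι → ℝ}

theorem sum_mul_sub_log_sum_exp_le (hu_nonneg : ∀ i, 0 ≤ u i) (hu_sum : ∑ i, u i = 1)
    (t : ι → ℝ) : ∑ i, u i * t i - log (∑ i, exp (t i)) ≤ ∑ i, u i * log (u i) := by
  set Z := ∑ i, exp (t i)
  have hZ : 0 < Z := sum_pos (fun i _ => exp_pos (t i))
    (nonempty_of_sum_ne_zero (hu_sum ▸ one_ne_zero))
  have h_young : ∑ i, u i * (t i - log Z) ≤ ∑ i, (u i * log (u i) - u i + exp (t i - log Z)) :=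
    sum_le_sum fun i _ => mul_le_mul_log_sub_add_exp (hu_nonneg i) _
  have h_normalized : ∑ i, exp (t i - log Z) = 1 := by
    simp_rw [exp_sub, exp_log hZ]
    rw [← sum_div, div_self hZ.ne']
  simp only [mul_sub, sum_add_distrib, sum_sub_distrib, ← sum_mul, hu_sum, h_normalized]
    at h_young
  linarith

theorem isLUB_range_sum_mul_sub_log_sum_exp (hu_nonneg : ∀ i, 0 ≤ u i)
    (hu_sum : ∑ i, u i = 1) :
    IsLUB (range fun t : ι → ℝ => ∑ i, u i * t i - log (∑ i, exp (t i)))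
      (∑ i, u i * log (u i)) := by
  refine ⟨?_, fun b hb => ?_⟩
  · rintro _ ⟨t, rfl⟩
    exact sum_mul_sub_log_sum_exp_le hu_nonneg hu_sum t
  set t : ℝ → ι → ℝ := fun s i => if u i = 0 then s else log (u i)
  have h_inner : ∀ s, ∑ i, u i * t s i = ∑ i, u i * log (u i) := fun s =>
    sum_congr rfl fun i _ => by by_cases h : u i = 0 <;> simp [t, h]
  have h_exp : Tendsto (fun s => ∑ i, exp (t s i)) atBot (𝓝 1) := by
    rw [← hu_sum]
    refine tendsto_finsetSum _ fun i _ => ?_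
    by_cases h : u i = 0
    · simpa [t, h] using tendsto_exp_atBot
    · simp [t, h, exp_log ((hu_nonneg i).lt_of_ne' h)]
  have h_lim : Tendsto (fun s => ∑ i, u i * t s i - log (∑ i, exp (t s i))) atBot
      (𝓝 (∑ i, u i * log (u i))) := by
    simp_rw [h_inner]
    simpa using tendsto_const_nhds.sub ((continuousAt_log one_ne_zero).tendsto.comp h_exp)
  exact le_of_tendsto' h_lim fun s => hb ⟨t s, rfl⟩

end Simplex

theorem logSumExp_fenchel_conjugate_on_simplex_general
    (I : ℕ) (ε : ℝ) (hε : 0 < ε)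
    (u : Fin I → ℝ) (hu_nonneg : ∀ i, 0 ≤ u i) (hu_sum : ∑ i, u i = 1) :
    IsLUB {y : ℝ | ∃ o : Fin I → ℝ,
        y = (∑ i, o i * u i) - ε * Real.log (∑ i, Real.exp (o i / ε))}
      (ε * ∑ i, u i * Real.log (u i)) := by
  have h_rescale : {y : ℝ | ∃ o : Fin I → ℝ,
      y = (∑ i, o i * u i) - ε * Real.log (∑ i, Real.exp (o i / ε))} =
      (fun y => ε * y) '' range fun t : Fin I → ℝ => ∑ i, u i * t i - log (∑ i, exp (t i)) := by
    ext y
    constructor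
    · rintro ⟨o, rfl⟩
      refine ⟨_, ⟨fun i => o i / ε, rfl⟩, ?_⟩
      simp only [mul_sub, mul_sum]
      congr 1
      exact sum_congr rfl fun i _ => by field_simp
    · rintro ⟨_, ⟨t, rfl⟩, rfl⟩
      refine ⟨fun i => ε * t i, ?_⟩
      simp only [mul_sub, mul_sum, mul_div_cancel_left₀ _ hε.ne']
      congr 1
      exact sum_congr rfl fun i _ => by ring
  rw [h_rescale]
  exact (isLUB_range_sum_mul_sub_log_sum_exp hu_nonneg hu_sum).mul_left hε.le

/-- Fenchel–Legendre conjugate of the log-sum-exp function `Mε(o) = ε log ∑ exp(oᵢ/ε)`: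
for `u` in the probability simplex, the supremum over `o` of `⟨o,u⟩ - Mε(o)` equals
`ε ∑ uᵢ log uᵢ` (on-simplex case of Proposition 1). -/
theorem logSumExp_fenchel_conjugate_on_simplex
    (I : ℕ) (hI : 1 ≤ I) (ε : ℝ) (hε : 0 < ε)
    (u : Fin I → ℝ) (hu_nonneg : ∀ i, 0 ≤ u i) (hu_sum : ∑ i, u i = 1) :
    IsLUB {y : ℝ | ∃ o : Fin I → ℝ,
        y = (∑ i, o i * u i) - ε * Real.log (∑ i, Real.exp (o i / ε))}
      (ε * ∑ i, u i * Real.log (u i)) :=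
  logSumExp_fenchel_conjugate_on_simplex_general I ε hε u hu_nonneg hu_sum
end

section
/- Let I ≥ 1 and let o ∈ ℝ^I. Then M_ε(o) converges to max_{1 ≤ i ≤ I} o_i as ε → 0 from the right; that is, the function ε ↦ ε · log(∑_{i=1}^I exp(o_i/ε)) tends to max_i o_i along the filter of positive ε tending to 0. -/
/-!
For `ε > 0`, comparing each term with the largest one gives `exp (max o / ε) ≤ ∑ exp (oᵢ / ε) ≤ I · exp (max o / ε)`.
Taking `ε · log` squeezes `M_ε(o)` between `max o` and `max o + ε log I`, and the second bound
tends to `max o` as `ε → 0`.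
-/

open Filter Finset Real Topology

namespace Finset

variable {ι : Type*} {s : Finset ι} {ε : ℝ}

theorem sup'_le_mul_log_sum_exp_div (hs : s.Nonempty) (o : ι → ℝ) (hε : 0 < ε) :
    s.sup' hs o ≤ ε * log (∑ i ∈ s, exp (o i / ε)) := by
  obtain ⟨i, hi, hmax⟩ := s.exists_mem_eq_sup' hs o
  have hsum_pos : 0 < ∑ j ∈ s, exp (o j / ε) := sum_pos (fun j _ ↦ exp_pos _) hs
  have hterm : exp (o i / ε) ≤ ∑ j ∈ s, exp (o j / ε) :=
    single_le_sum (f := fun j ↦ exp (o j / ε)) (fun j _ ↦ (exp_pos _).le) hi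
  rw [hmax, ← div_le_iff₀' hε]
  exact (le_log_iff_exp_le hsum_pos).2 hterm

theorem mul_log_sum_exp_div_le (hs : s.Nonempty) (o : ι → ℝ) (hε : 0 < ε) :
    ε * log (∑ i ∈ s, exp (o i / ε)) ≤ s.sup' hs o + ε * log #s := by
  set m := s.sup' hs o
  have hcard_pos : (0 : ℝ) < #s := by exact_mod_cast hs.card_pos
  have hsum_pos : 0 < ∑ j ∈ s, exp (o j / ε) := sum_pos (fun j _ ↦ exp_pos _) hs
  have hsum_le : ∑ j ∈ s, exp (o j / ε) ≤ #s * exp (m / ε) := by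
    rw [← nsmul_eq_mul]
    refine sum_le_card_nsmul s _ _ fun j hj ↦ exp_le_exp.2 ?_
    gcongr
    exact le_sup' o hj
  have hlog : log (∑ j ∈ s, exp (o j / ε)) ≤ m / ε + log #s := by
    rw [log_le_iff_le_exp hsum_pos, exp_add, exp_log hcard_pos, mul_comm]
    exact hsum_le
  calc ε * log (∑ j ∈ s, exp (o j / ε)) ≤ ε * (m / ε + log #s) := by gcongr
    _ = m + ε * log #s := by field_simp

end Finset

/-- As `ε → 0⁺`, the log-sum-exp `Mε(o) = ε log ∑ exp(oᵢ/ε)` tends to `max oᵢ`. -/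
theorem logSumExp_tendsto_max
    (I : ℕ) (hI : 1 ≤ I) (o : Fin I → ℝ) :
    Filter.Tendsto (fun ε : ℝ => ε * Real.log (∑ i, Real.exp (o i / ε)))
      (nhdsWithin 0 (Set.Ioi 0))
      (nhds (Finset.univ.sup' ⟨⟨0, hI⟩, Finset.mem_univ _⟩ o)) := by
  have hne : (univ : Finset (Fin I)).Nonempty := ⟨⟨0, hI⟩, mem_univ _⟩
  set m := univ.sup' hne o
  have hupper : Tendsto (fun ε : ℝ ↦ m + ε * log (Fintype.card (Fin I))) (𝓝[>] 0) (𝓝 m) :=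
    ((continuous_const.add (continuous_id.mul continuous_const)).tendsto' 0 m
      (by simp [m])).mono_left nhdsWithin_le_nhds
  refine tendsto_of_tendsto_of_tendsto_of_le_of_le' tendsto_const_nhds hupper ?_ ?_
  all_goals filter_upwards [self_mem_nhdsWithin] with ε (hε : 0 < ε)
  · exact univ.sup'_le_mul_log_sum_exp_div hne o hε
  · exact univ.mul_log_sum_exp_div_le hne o hε
end

section
/- Let Ω be a finite set, I ≥ 1, λ ≥ 0, and let K : Ω × Ω → ℝ be symmetric and positive semidefinite, i.e. K(x,y) = K(y,x) and ∑_{x,y ∈ Ω} K(x,y) w(x) w(y) ≥ 0 for every w : Ω → ℝ. Then the threshold-dynamics regularizer R(u) = λ · ∑_{i=1}^I ∑_{x ∈ Ω} u_i(x) ∑_{y ∈ Ω} K(x,y)(1 − u_i(y)), defined for u : Ω → ℝ^I, is a concave function of u on all of (ℝ^I)^Ω. -/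
/-! The regularizer is, in each label `i`, a linear function of `uᵢ` minus the quadratic form
`w ↦ ∑ₓ ∑_y K(x,y) w(x) w(y)` evaluated at `uᵢ`. Along a convex combination `a p + b q` this
quadratic form falls short of `a Q(p) + b Q(q)` by exactly `a b Q(p - q) ≥ 0`, so each summand
is concave, and so are their nonnegative combinations. -/

open Finset

theorem ConcaveOn.finset_sum {ι E : Type*} [AddCommMonoid E] [Module ℝ E] {s : Set E}
    (t : Finset ι) {f : ι → E → ℝ} (hs : Convex ℝ s) (hf : ∀ i ∈ t, ConcaveOn ℝ s (f i)) :
    ConcaveOn ℝ s fun x => ∑ i ∈ t, f i x := by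
  classical
  induction t using Finset.induction_on with
  | empty => simpa using concaveOn_const (0 : ℝ) hs
  | insert j t hj ih =>
    simp only [sum_insert hj]
    exact (hf j (mem_insert_self j t)).add (ih fun i hi => hf i (mem_insert_of_mem hi))

section Kernel

variable {Ω : Type*} [Fintype Ω] (K : Ω → Ω → ℝ)

theorem sum_mul_sum_one_sub_convexCombination {a b : ℝ} (hab : a + b = 1) (p q : Ω → ℝ) :
    ∑ x, (a * p x + b * q x) * ∑ y, K x y * (1 - (a * p y + b * q y))
      = a * ∑ x, p x * ∑ y, K x y * (1 - p y) + b * ∑ x, q x * ∑ y, K x y * (1 - q y)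
        + a * b * ∑ x, ∑ y, K x y * (p x - q x) * (p y - q y) := by
  obtain rfl : b = 1 - a := by linarith
  simp only [mul_sum, ← sum_add_distrib]
  refine sum_congr rfl fun x _ => sum_congr rfl fun y _ => ?_
  ring

theorem concaveOn_sum_mul_sum_one_sub
    (hK : ∀ w : Ω → ℝ, 0 ≤ ∑ x, ∑ y, K x y * w x * w y) :
    ConcaveOn ℝ Set.univ fun p : Ω → ℝ => ∑ x, p x * ∑ y, K x y * (1 - p y) := by
  refine ⟨convex_univ, fun p _ q _ a b ha hb hab => ?_⟩
  simp only [smul_eq_mul, Pi.add_apply, Pi.smul_apply]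
  rw [sum_mul_sum_one_sub_convexCombination K hab]
  have := mul_nonneg (mul_nonneg ha hb) (hK (p - q))
  simp only [Pi.sub_apply] at this
  linarith

end Kernel

theorem threshold_dynamics_regularizer_concave_general
    (Ω : Type*) [Fintype Ω] (I : ℕ) (lam : ℝ) (hlam : 0 ≤ lam)
    (K : Ω → Ω → ℝ)
    (hK_psd : ∀ w : Ω → ℝ, 0 ≤ ∑ x : Ω, ∑ y : Ω, K x y * w x * w y) :
    ConcaveOn ℝ Set.univ
      (fun u : Ω → Fin I → ℝ =>
        lam * ∑ i : Fin I, ∑ x : Ω, u x i * ∑ y : Ω, K x y * (1 - u y i)) := by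
  have hlabel (i : Fin I) : ConcaveOn ℝ Set.univ
      fun u : Ω → Fin I → ℝ => ∑ x, u x i * ∑ y, K x y * (1 - u y i) :=
    (concaveOn_sum_mul_sum_one_sub K hK_psd).comp_linearMap
      ((LinearMap.proj (R := ℝ) (φ := fun _ : Fin I => ℝ) i).compLeft Ω)
  exact (ConcaveOn.finset_sum univ convex_univ fun i _ => hlabel i).smul hlam

/-- If `K` is symmetric positive semidefinite and `λ ≥ 0`, the threshold-dynamics
regularizer `R(u) = λ ∑ᵢ ∑ₓ uᵢ(x) ∑_y K(x,y)(1 - uᵢ(y))` is concave on `(ℝ^I)^Ω`. -/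
theorem threshold_dynamics_regularizer_concave
    (Ω : Type*) [Fintype Ω] (I : ℕ) (hI : 1 ≤ I) (lam : ℝ) (hlam : 0 ≤ lam)
    (K : Ω → Ω → ℝ) (hK_symm : ∀ x y, K x y = K y x)
    (hK_psd : ∀ w : Ω → ℝ, 0 ≤ ∑ x : Ω, ∑ y : Ω, K x y * w x * w y) :
    ConcaveOn ℝ Set.univ
      (fun u : Ω → Fin I → ℝ =>
        lam * ∑ i : Fin I, ∑ x : Ω, u x i * ∑ y : Ω, K x y * (1 - u y i)) :=
  threshold_dynamics_regularizer_concave_general Ω I lam hlam K hK_psd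
end

section
/- (Energy descent of the STD-softmax iteration, Algorithm 1.) Let Ω be a finite nonempty set, I ≥ 1, ε > 0, λ ≥ 0, let o : Ω → ℝ^I, and let K : Ω × Ω → ℝ be symmetric and positive semidefinite (K(x,y) = K(y,x) and ∑_{x,y} K(x,y) w(x) w(y) ≥ 0 for all w : Ω → ℝ). Define the total energy E(u) = ∑_{x ∈ Ω} [ −∑_{i=1}^I o_i(x) u_i(x) + ε ∑_{i=1}^I u_i(x) log(u_i(x)) ] + λ ∑_{i=1}^I ∑_{x,y ∈ Ω} u_i(x) K(x,y)(1 − u_i(y)). Let u : Ω → ℝ^I satisfy u(x) ∈ U for every x, set p_i(x) = λ ∑_{y ∈ Ω} K(x,y)(1 − 2 u_i(y)), and define the next iterate pointwise by u'(x) = S_ε(o(x) − p(x)). Then E(u') ≤ E(u). -/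
/-!
The kernel energy `f ↦ ∑ f K (1 - f)` is concave because `K` is positive semidefinite, so it
lies below its linearization at `u`, whose gradient is `K (1 - 2u)`. Replacing the kernel energy
by this linearization adds `⟨p, ·⟩` to the fidelity term, and the softmax `S_ε(o - p)` is the
exact minimizer of the resulting entropic energy over the simplex (Gibbs' variational principle).
Hence `E(u') ≤ linearized energy at u' ≤ linearized energy at u = E(u)`.
-/

open Real Finset

noncomputable section

variable {ι : Type*} [Fintype ι]

def softmax (ε : ℝ) (a : ι → ℝ) : ι → ℝ := fun i => exp (a i / ε) / ∑ j, exp (a j / ε)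

def freeEnergy (ε : ℝ) (a v : ι → ℝ) : ℝ := -(∑ i, a i * v i) + ε * ∑ i, v i * log (v i)

lemma freeEnergy_sub (ε : ℝ) (a b v : ι → ℝ) :
    freeEnergy ε (a - b) v = freeEnergy ε a v + ∑ i, b i * v i := by
  simp only [freeEnergy, Pi.sub_apply, sub_mul, sum_sub_distrib]
  ring

lemma sub_le_mul_sub_log {v s : ℝ} (hv : 0 ≤ v) (hs : 0 < s) :
    v - s ≤ v * (log v - log s) := by
  rcases hv.eq_or_lt with rfl | hv
  · simpa using hs.le
  have h := mul_le_mul_of_nonneg_left (self_sub_one_le_mul_log (div_nonneg hv.le hs.le)) hs.le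
  rw [← log_div hv.ne' hs.ne']
  field_simp at h
  linarith

lemma softmax_pos [Nonempty ι] (ε : ℝ) (a : ι → ℝ) (i : ι) : 0 < softmax ε a i := by
  unfold softmax; positivity

lemma sum_softmax [Nonempty ι] (ε : ℝ) (a : ι → ℝ) : ∑ i, softmax ε a i = 1 := by
  simp only [softmax, ← Finset.sum_div]
  exact div_self (by positivity)

lemma log_softmax [Nonempty ι] (ε : ℝ) (a : ι → ℝ) (i : ι) :
    log (softmax ε a i) = a i / ε - log (∑ j, exp (a j / ε)) := by
  rw [softmax, log_div (exp_ne_zero _) (by positivity), log_exp]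

theorem freeEnergy_softmax_le {ε : ℝ} (hε : 0 < ε) (a v : ι → ℝ) (hv0 : ∀ i, 0 ≤ v i)
    (hv1 : ∑ i, v i = 1) : freeEnergy ε a (softmax ε a) ≤ freeEnergy ε a v := by
  have : Nonempty ι := by
    by_contra h
    simp [not_nonempty_iff.mp h] at hv1
  set s := softmax ε a
  set L := log (∑ j, exp (a j / ε))
  have key : ∀ i ∈ univ, ε * (v i - s i) ≤ ε * (v i * log (v i)) - a i * v i
      - (ε * (s i * log (s i)) - a i * s i) + ε * L * (v i - s i) := by
    intro i _
    -- `ε log s = a - ε L`, so this is `ε v log (v / s) ≥ ε (v - s)`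
    have ha : a i = ε * (log (s i) + L) := by rw [log_softmax]; field_simp; ring
    have := mul_le_mul_of_nonneg_left (sub_le_mul_sub_log (hv0 i) (softmax_pos ε a i)) hε.le
    rw [ha]; linarith
  have := sum_le_sum key
  simp only [← mul_sum, sum_sub_distrib, sum_add_distrib, hv1, sum_softmax, s] at this
  unfold freeEnergy
  linarith

variable {Ω : Type*} [Fintype Ω]

def kernelEnergy (K : Ω → Ω → ℝ) (f : Ω → ℝ) : ℝ := ∑ x, ∑ y, f x * (K x y * (1 - f y))

lemma kernelEnergy_eq_linearization_sub {K : Ω → Ω → ℝ} (hK : ∀ x y, K x y = K y x)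
    (f g : Ω → ℝ) :
    kernelEnergy K f = kernelEnergy K g + ∑ x, (f x - g x) * ∑ y, K x y * (1 - 2 * g y)
      - ∑ x, ∑ y, K x y * (f x - g x) * (f y - g y) := by
  have hswap : ∑ x, ∑ y, K x y * g x * f y = ∑ x, ∑ y, K x y * f x * g y := by
    rw [sum_comm]
    exact sum_congr rfl fun x _ => sum_congr rfl fun y _ => by rw [hK]; ring
  -- the last summand is antisymmetric in `x, y`, so its double sum vanishes
  calc kernelEnergy K f
      = ∑ x, ∑ y, (g x * (K x y * (1 - g y)) + (f x - g x) * (K x y * (1 - 2 * g y))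
          - K x y * (f x - g x) * (f y - g y) + (K x y * f x * g y - K x y * g x * f y)) :=
        sum_congr rfl fun x _ => sum_congr rfl fun y _ => by ring
    _ = _ := by
        simp only [kernelEnergy, sum_add_distrib, sum_sub_distrib, hswap, mul_sum]
        ring

theorem kernelEnergy_le_linearization {K : Ω → Ω → ℝ} (hK : ∀ x y, K x y = K y x)
    (hpsd : ∀ w : Ω → ℝ, 0 ≤ ∑ x, ∑ y, K x y * w x * w y) (f g : Ω → ℝ) :
    kernelEnergy K f ≤ kernelEnergy K g + ∑ x, (f x - g x) * ∑ y, K x y * (1 - 2 * g y) := by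
  rw [kernelEnergy_eq_linearization_sub hK f g]
  exact sub_le_self _ (hpsd fun x => f x - g x)

end

theorem std_softmax_energy_descent_general
    (Ω : Type*) [Fintype Ω] (I : ℕ)
    (ε : ℝ) (hε : 0 < ε) (lam : ℝ) (hlam : 0 ≤ lam)
    (o : Ω → Fin I → ℝ)
    (K : Ω → Ω → ℝ) (hK_symm : ∀ x y, K x y = K y x)
    (hK_psd : ∀ w : Ω → ℝ, 0 ≤ ∑ x : Ω, ∑ y : Ω, K x y * w x * w y)
    (u : Ω → Fin I → ℝ) (hu : ∀ x, (∀ i, 0 ≤ u x i) ∧ ∑ i, u x i = 1)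
    (p : Ω → Fin I → ℝ)
    (hp : ∀ x i, p x i = lam * ∑ y : Ω, K x y * (1 - 2 * u y i))
    (u' : Ω → Fin I → ℝ)
    (hu' : ∀ x i, u' x i =
      Real.exp ((o x i - p x i) / ε) / ∑ j, Real.exp ((o x j - p x j) / ε)) :
    (∑ x : Ω, (-(∑ i, o x i * u' x i) + ε * ∑ i, u' x i * Real.log (u' x i)))
        + lam * ∑ i : Fin I, ∑ x : Ω, ∑ y : Ω, u' x i * (K x y * (1 - u' y i))
      ≤ (∑ x : Ω, (-(∑ i, o x i * u x i) + ε * ∑ i, u x i * Real.log (u x i)))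
        + lam * ∑ i : Fin I, ∑ x : Ω, ∑ y : Ω, u x i * (K x y * (1 - u y i)) := by
  change ∑ x, freeEnergy ε (o x) (u' x) + lam * ∑ i, kernelEnergy K (fun x => u' x i)
    ≤ ∑ x, freeEnergy ε (o x) (u x) + lam * ∑ i, kernelEnergy K (fun x => u x i)
  have h_gibbs : ∑ x, freeEnergy ε (o x - p x) (u' x) ≤ ∑ x, freeEnergy ε (o x - p x) (u x) :=
    sum_le_sum fun x _ => by
      rw [show u' x = softmax ε (o x - p x) from funext (hu' x)]
      exact freeEnergy_softmax_le hε _ _ (hu x).1 (hu x).2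
  have h_concave : lam * ∑ i, kernelEnergy K (fun x => u' x i)
      ≤ lam * ∑ i, kernelEnergy K (fun x => u x i) + ∑ x, ∑ i, p x i * (u' x i - u x i) := by
    have h := mul_le_mul_of_nonneg_left (sum_le_sum fun i (_ : i ∈ univ) =>
      kernelEnergy_le_linearization hK_symm hK_psd (fun x => u' x i) (fun x => u x i)) hlam
    rw [sum_add_distrib, mul_add, sum_comm] at h
    simpa only [hp, mul_sum, mul_comm, mul_left_comm] using h
  simp only [freeEnergy_sub, mul_sub, sum_sub_distrib, sum_add_distrib] at h_gibbs h_concave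
  linarith

/-- Energy descent of the STD-softmax iteration (Algorithm 1): one step of the soft
threshold dynamics iteration `u'(x) = Sε(o(x) - p(x))`, with
`pᵢ(x) = λ ∑_y K(x,y)(1 - 2 uᵢ(y))`, does not increase the STD energy
`E(u) = ∑ₓ [ -⟨o(x),u(x)⟩ + ε ∑ᵢ uᵢ(x) log uᵢ(x) ] + λ ∑ᵢ ∑_{x,y} uᵢ(x) K(x,y)(1 - uᵢ(y))`. -/
theorem std_softmax_energy_descent
    (Ω : Type*) [Fintype Ω] [Nonempty Ω] (I : ℕ) (hI : 1 ≤ I)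
    (ε : ℝ) (hε : 0 < ε) (lam : ℝ) (hlam : 0 ≤ lam)
    (o : Ω → Fin I → ℝ)
    (K : Ω → Ω → ℝ) (hK_symm : ∀ x y, K x y = K y x)
    (hK_psd : ∀ w : Ω → ℝ, 0 ≤ ∑ x : Ω, ∑ y : Ω, K x y * w x * w y)
    (u : Ω → Fin I → ℝ) (hu : ∀ x, (∀ i, 0 ≤ u x i) ∧ ∑ i, u x i = 1)
    (p : Ω → Fin I → ℝ)
    (hp : ∀ x i, p x i = lam * ∑ y : Ω, K x y * (1 - 2 * u y i))
    (u' : Ω → Fin I → ℝ)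
    (hu' : ∀ x i, u' x i =
      Real.exp ((o x i - p x i) / ε) / ∑ j, Real.exp ((o x j - p x j) / ε)) :
    (∑ x : Ω, (-(∑ i, o x i * u' x i) + ε * ∑ i, u' x i * Real.log (u' x i)))
        + lam * ∑ i : Fin I, ∑ x : Ω, ∑ y : Ω, u' x i * (K x y * (1 - u' y i))
      ≤ (∑ x : Ω, (-(∑ i, o x i * u x i) + ε * ∑ i, u x i * Real.log (u x i)))
        + lam * ∑ i : Fin I, ∑ x : Ω, ∑ y : Ω, u x i * (K x y * (1 - u y i)) :=
  std_softmax_energy_descent_general Ω I ε hε lam hlam o K hK_symm hK_psd u hu p hp u' hu'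
end
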